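/- Let G be an infinite locally finite graph with maximum degree d_max and Hashimoto matrix H bounded on ℓ² with spectral radius ρ_{ℓ²}(H). For site percolation with p < 1/ρ_{ℓ²}(H), there exist ρ' < 1 and C > 0 such that for all vertices u ≠ v, τ_{u,v} ≤ C (ρ')^{d(u,v)}, i.e., connectivity decays exponentially in graph distance. -/

import Mathlib

open Filter MeasureTheory
open scoped ENNReal RealInnerProductSpace Classical

noncomputable abbrev l2 (A : Type*) := lp (fun _ : A => ℝ) 2

/-- standard basis vector `e_v` of `ℓ²(A)`. -/
noncomputable def e {A : Type*} [DecidableEq A] (v : A) : l2 A := lp.single 2 v (1 : ℝ)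

/-- In the configuration `ω`, vertices `u` and `v` are connected by an open path. -/
def openConn {V : Type*} (G : SimpleGraph V) (ω : V → Bool) (u v : V) : Prop :=
  ∃ w : G.Walk u v, ∀ x ∈ w.support, ω x = true

/-!
An open connection from `u` to `v` contains an open path (take the bypass of an open walk), and
a path with `L` edges is open with probability `p ^ (L + 1)`. A path is non-backtracking, so the
number of paths with `m + 1` edges from `u` to `v` is at most `⟪x_u, Hᵐ y_v⟫`, where `x_u` (`y_v`)
is the sum of the basis vectors of the darts leaving `u` (entering `v`); both have norm at most
`d_max`, so this count is at most `d_max² ‖Hᵐ‖`. As `‖Hᵐ‖^{1/m} → ρ` and `pρ < ρ' < 1`, we get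
`pᵐ ‖Hᵐ‖ ≤ C' ρ'ᵐ`, and the union bound over paths, which have length at least `d(u, v)`, is a
geometric tail of order `ρ'^{d(u, v)}`.
-/

open Topology SimpleGraph
open scoped Finset

section BasisVectors
variable {A : Type*} [DecidableEq A]

theorem inner_e_left (a : A) (f : l2 A) : ⟪e a, f⟫ = f a := by
  simp [e, lp.inner_single_left]

theorem inner_e_sum_e (a : A) (s : Finset A) :
    ⟪e a, ∑ b ∈ s, e b⟫ = if a ∈ s then 1 else 0 := by
  simp_rw [inner_sum, inner_e_left, e, lp.single_apply]
  simp

theorem norm_sum_e_le (s : Finset A) : ‖∑ a ∈ s, e a‖ ≤ #s :=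
  (norm_sum_le _ _).trans (by simp [e, lp.norm_single])

end BasisVectors

namespace SimpleGraph
variable {V : Type*} (G : SimpleGraph V) [G.LocallyFinite]

noncomputable def dartsFrom (v : V) : Finset G.Dart :=
  Finset.univ.image (G.dartOfNeighborSet v)

noncomputable def dartsTo (v : V) : Finset G.Dart :=
  (G.dartsFrom v).image Dart.symm

noncomputable def nextDarts (a : G.Dart) : Finset G.Dart :=
  (G.dartsFrom a.snd).filter (· ≠ a.symm)

variable {G}

@[simp]
theorem mem_dartsFrom {v : V} {a : G.Dart} : a ∈ G.dartsFrom v ↔ a.fst = v := by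
  refine ⟨?_, fun h => Finset.mem_image.mpr ⟨⟨a.snd, h ▸ a.adj⟩, Finset.mem_univ _, ?_⟩⟩
  · intro h
    obtain ⟨w, -, rfl⟩ := Finset.mem_image.mp h
    rfl
  · ext <;> simp [h]

@[simp]
theorem mem_dartsTo {v : V} {a : G.Dart} : a ∈ G.dartsTo v ↔ a.snd = v := by
  refine ⟨fun h => ?_, fun h => Finset.mem_image.mpr ⟨a.symm, by simpa using h, a.symm_symm⟩⟩
  obtain ⟨b, hb, rfl⟩ := Finset.mem_image.mp h
  exact mem_dartsFrom.mp hb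

@[simp]
theorem mem_nextDarts {a c : G.Dart} : c ∈ G.nextDarts a ↔ c.fst = a.snd ∧ c ≠ a.symm := by
  simp [nextDarts]

theorem card_dartsFrom (v : V) : #(G.dartsFrom v) = G.degree v := by
  rw [dartsFrom, Finset.card_image_of_injective _ (G.dartOfNeighborSet_injective v),
    Finset.card_univ, card_neighborSet_eq_degree]

theorem card_dartsTo (v : V) : #(G.dartsTo v) = G.degree v := by
  rw [dartsTo, Finset.card_image_of_injective _ Dart.symm_involutive.injective, card_dartsFrom]

end SimpleGraph

section Hashimoto
variable {V : Type*} {G : SimpleGraph V} [G.LocallyFinite]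

variable (G) in
def IsHashimoto (T : l2 G.Dart →L[ℝ] l2 G.Dart) : Prop :=
  ∀ a b : G.Dart, ⟪e a, T (e b)⟫ = if a.snd = b.fst ∧ b ≠ a.symm then 1 else 0

variable {T : l2 G.Dart →L[ℝ] l2 G.Dart}

theorem IsHashimoto.adjoint_apply_e (hT : IsHashimoto G T) (a : G.Dart) :
    ContinuousLinearMap.adjoint T (e a) = ∑ c ∈ G.nextDarts a, e c := by
  ext c
  rw [← inner_e_left, ← inner_e_left, ContinuousLinearMap.adjoint_inner_right, real_inner_comm,
    hT, inner_e_sum_e]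
  simp only [mem_nextDarts, eq_comm]

theorem IsHashimoto.inner_e_apply (hT : IsHashimoto G T) (a : G.Dart) (f : l2 G.Dart) :
    ⟪e a, T f⟫ = ∑ c ∈ G.nextDarts a, ⟪e c, f⟫ := by
  rw [← ContinuousLinearMap.adjoint_inner_left, hT.adjoint_apply_e, sum_inner]

end Hashimoto

namespace SimpleGraph
variable {V : Type*} {G : SimpleGraph V}

def Walk.uncons {v : V} : {x : V} → G.Walk x v → Option (Σ d : G.Dart, G.Walk d.snd v)
  | _, .nil => none
  | _, .cons h q => some ⟨⟨(_, _), h⟩, q⟩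

theorem Walk.uncons_injective {x v : V} : Function.Injective (uncons : G.Walk x v → _) := by
  rintro (_ | ⟨h₁, q₁⟩) (_ | ⟨h₂, q₂⟩) h
  · rfl
  · cases h
  · cases h
  · simp only [uncons, Option.some.injEq, Sigma.mk.injEq, Dart.mk.injEq, Prod.mk.injEq,
      true_and] at h
    obtain ⟨rfl, h⟩ := h
    rw [eq_of_heq h]

theorem card_le_sum_card_of_forall_cons {x v : V} {s : Finset (G.Walk x v)} (D : Finset G.Dart)
    (t : ∀ d : G.Dart, Finset (G.Walk d.snd v)) (hs : ∀ w ∈ s, 0 < w.length)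
    (hst : ∀ y (h : G.Adj x y) (q : G.Walk y v),
      Walk.cons h q ∈ s → ⟨(x, y), h⟩ ∈ D ∧ q ∈ t ⟨(x, y), h⟩) :
    #s ≤ ∑ d ∈ D, #(t d) := by
  calc #s ≤ #((D.sigma t).map ⟨some, Option.some_injective _⟩) := by
        refine Finset.card_le_card_of_injOn Walk.uncons ?_ Walk.uncons_injective.injOn
        rintro (_ | ⟨h, q⟩) hw
        · exact absurd (hs _ hw) (by simp)
        · obtain ⟨hD, ht⟩ := hst _ h q hw
          exact Finset.mem_map_of_mem _ (Finset.mem_sigma.mpr ⟨hD, ht⟩)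
    _ = ∑ d ∈ D, #(t d) := by rw [Finset.card_map, Finset.card_sigma]

variable (G) [G.LocallyFinite]

noncomputable def finsetPathLength (L : ℕ) (u v : V) : Finset (G.Walk u v) :=
  (G.finsetWalkLength L u v).filter Walk.IsPath

noncomputable def pathContinuations (m : ℕ) (a : G.Dart) (v : V) : Finset (G.Walk a.snd v) :=
  (G.finsetWalkLength m a.snd v).filter fun q => (Walk.cons a.adj q).IsPath

variable {G}

@[simp]
theorem mem_finsetPathLength {L : ℕ} {u v : V} {w : G.Walk u v} :
    w ∈ G.finsetPathLength L u v ↔ w.length = L ∧ w.IsPath := by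
  simp [finsetPathLength, mem_finsetWalkLength_iff]

@[simp]
theorem mem_pathContinuations {m : ℕ} {a : G.Dart} {v : V} {q : G.Walk a.snd v} :
    q ∈ G.pathContinuations m a v ↔ q.length = m ∧ (Walk.cons a.adj q).IsPath := by
  simp [pathContinuations, mem_finsetWalkLength_iff]

theorem card_pathContinuations_zero_le (a : G.Dart) (v : V) :
    #(G.pathContinuations 0 a v) ≤ if a ∈ G.dartsTo v then 1 else 0 := by
  split_ifs with ha
  · refine Finset.card_le_one.mpr fun q₁ h₁ q₂ h₂ => ?_
    cases q₁ <;> cases q₂ <;> simp_all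
  · refine (Finset.card_eq_zero.mpr (Finset.eq_empty_of_forall_notMem fun q hq => ha ?_)).le
    exact mem_dartsTo.mpr (Walk.eq_of_length_eq_zero (mem_pathContinuations.mp hq).1)

theorem card_pathContinuations_succ_le (m : ℕ) (a : G.Dart) (v : V) :
    #(G.pathContinuations (m + 1) a v) ≤ ∑ c ∈ G.nextDarts a, #(G.pathContinuations m c v) := by
  refine card_le_sum_card_of_forall_cons _ _ (fun w hw => by simp_all) fun y h q hq => ?_
  obtain ⟨hlen, hpath⟩ := mem_pathContinuations.mp hq
  have hfst : a.fst ∉ (Walk.cons h q).support := (Walk.cons_isPath_iff _ _).mp hpath |>.2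
  refine ⟨mem_nextDarts.mpr ⟨rfl, fun hback => hfst ?_⟩,
    mem_pathContinuations.mpr ⟨by simpa using hlen, hpath.of_cons⟩⟩
  have : y = a.fst := congrArg (·.snd) hback
  exact Walk.support_cons h q ▸ List.mem_cons_of_mem _ (this ▸ q.start_mem_support)

theorem card_finsetPathLength_succ_le (m : ℕ) (u v : V) :
    #(G.finsetPathLength (m + 1) u v) ≤ ∑ a ∈ G.dartsFrom u, #(G.pathContinuations m a v) := by
  refine card_le_sum_card_of_forall_cons _ _ (fun w hw => by simp_all) fun y h q hq => ?_
  obtain ⟨hlen, hpath⟩ := mem_finsetPathLength.mp hq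
  exact ⟨mem_dartsFrom.mpr rfl, mem_pathContinuations.mpr ⟨by simpa using hlen, hpath⟩⟩

theorem finsetPathLength_eq_empty_of_lt_dist {L : ℕ} {u v : V} (hL : L < G.dist u v) :
    G.finsetPathLength L u v = ∅ :=
  Finset.eq_empty_of_forall_notMem fun w hw =>
    hL.not_ge ((mem_finsetPathLength.mp hw).1 ▸ dist_le w)

end SimpleGraph

section Counting
variable {V : Type*} {G : SimpleGraph V} [G.LocallyFinite] {T : l2 G.Dart →L[ℝ] l2 G.Dart}

theorem IsHashimoto.card_pathContinuations_le (hT : IsHashimoto G T) (v : V) (m : ℕ)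
    (a : G.Dart) :
    (#(G.pathContinuations m a v) : ℝ) ≤ ⟪e a, (T ^ m) (∑ b ∈ G.dartsTo v, e b)⟫ := by
  induction m generalizing a with
  | zero =>
    rw [pow_zero, one_apply_eq_self, inner_e_sum_e]
    exact_mod_cast card_pathContinuations_zero_le a v
  | succ m ih =>
    calc (#(G.pathContinuations (m + 1) a v) : ℝ)
        ≤ ∑ c ∈ G.nextDarts a, (#(G.pathContinuations m c v) : ℝ) := by
          exact_mod_cast card_pathContinuations_succ_le m a v
      _ ≤ ∑ c ∈ G.nextDarts a, ⟪e c, (T ^ m) (∑ b ∈ G.dartsTo v, e b)⟫ :=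
          Finset.sum_le_sum fun c _ => ih c
      _ = ⟪e a, (T ^ (m + 1)) (∑ b ∈ G.dartsTo v, e b)⟫ := by
          rw [pow_succ', mul_apply_eq_comp, hT.inner_e_apply]

theorem IsHashimoto.card_finsetPathLength_succ_le_mul_norm (hT : IsHashimoto G T) {dmax : ℕ}
    (hd : ∀ v, G.degree v ≤ dmax) (m : ℕ) (u v : V) :
    (#(G.finsetPathLength (m + 1) u v) : ℝ) ≤ dmax ^ 2 * ‖T ^ m‖ := by
  have hnorm : ∀ (s : Finset G.Dart), #s ≤ dmax → ‖∑ a ∈ s, e a‖ ≤ dmax := fun s hs =>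
    (norm_sum_e_le s).trans (by exact_mod_cast hs)
  have hu := hnorm _ ((card_dartsFrom u).trans_le (hd u))
  have hv := hnorm _ ((card_dartsTo v).trans_le (hd v))
  calc (#(G.finsetPathLength (m + 1) u v) : ℝ)
      ≤ ∑ a ∈ G.dartsFrom u, (#(G.pathContinuations m a v) : ℝ) := by
        exact_mod_cast card_finsetPathLength_succ_le m u v
    _ ≤ ∑ a ∈ G.dartsFrom u, ⟪e a, (T ^ m) (∑ b ∈ G.dartsTo v, e b)⟫ :=
        Finset.sum_le_sum fun a _ => hT.card_pathContinuations_le v m a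
    _ = ⟪∑ a ∈ G.dartsFrom u, e a, (T ^ m) (∑ b ∈ G.dartsTo v, e b)⟫ := (sum_inner _ _ _).symm
    _ ≤ ‖∑ a ∈ G.dartsFrom u, e a‖ * (‖T ^ m‖ * ‖∑ b ∈ G.dartsTo v, e b‖) :=
        (real_inner_le_norm _ _).trans (by gcongr; exact (T ^ m).le_opNorm _)
    _ ≤ dmax * (‖T ^ m‖ * dmax) := by gcongr
    _ = dmax ^ 2 * ‖T ^ m‖ := by ring

theorem IsHashimoto.card_finsetPathLength_mul_pow_le (hT : IsHashimoto G T) {dmax : ℕ}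
    (hd : ∀ v, G.degree v ≤ dmax) {p ρ C : ℝ} (hp0 : 0 ≤ p) (hp1 : p ≤ 1) (hρ : 0 < ρ)
    (hC0 : 0 ≤ C) (hC : ∀ m, p ^ m * ‖T ^ m‖ ≤ C * ρ ^ m) {u v : V} (huv : u ≠ v) (L : ℕ) :
    (#(G.finsetPathLength L u v) : ℝ≥0∞) * ENNReal.ofReal p ^ (L + 1) ≤
      ENNReal.ofReal (dmax ^ 2 * C / ρ * ρ ^ L) := by
  rw [← ENNReal.ofReal_pow hp0, ← ENNReal.ofReal_natCast, ← ENNReal.ofReal_mul (by positivity)]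
  refine ENNReal.ofReal_le_ofReal ?_
  cases L with
  | zero =>
    have hempty : G.finsetPathLength 0 u v = ∅ := Finset.eq_empty_of_forall_notMem fun w hw =>
      huv (Walk.eq_of_length_eq_zero (mem_finsetPathLength.mp hw).1)
    simp only [hempty, Finset.card_empty, Nat.cast_zero, zero_mul]
    positivity
  | succ m =>
    calc (#(G.finsetPathLength (m + 1) u v) : ℝ) * p ^ (m + 1 + 1)
        ≤ (dmax ^ 2 * ‖T ^ m‖) * p ^ m :=
          mul_le_mul (hT.card_finsetPathLength_succ_le_mul_norm hd m u v)
            (pow_le_pow_of_le_one hp0 hp1 (by omega)) (by positivity) (by positivity)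
      _ = dmax ^ 2 * (p ^ m * ‖T ^ m‖) := by ring
      _ ≤ dmax ^ 2 * (C * ρ ^ m) := mul_le_mul_of_nonneg_left (hC m) (by positivity)
      _ = dmax ^ 2 * C / ρ * ρ ^ (m + 1) := by field_simp; ring

end Counting

section Percolation
variable {V : Type*} {p : ℝ} {μ : Measure (V → Bool)}

theorem measure_forall_support_eq_true {G : SimpleGraph V}
    (hBern : ∀ (s : Finset V) (f : V → Bool),
      μ {ω | ∀ v ∈ s, ω v = f v} =
        ∏ v ∈ s, if f v then ENNReal.ofReal p else ENNReal.ofReal (1 - p))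
    {u v : V} {w : G.Walk u v} (hw : w.IsPath) :
    μ {ω | ∀ x ∈ w.support, ω x = true} = ENNReal.ofReal p ^ (w.length + 1) := by
  have h := hBern w.support.toFinset fun _ => true
  simp only [List.mem_toFinset, if_true, Finset.prod_const] at h
  rwa [List.toFinset_card_of_nodup hw.support_nodup, Walk.length_support] at h

theorem measure_openConn_le_tsum (G : SimpleGraph V) [G.LocallyFinite]
    (hBern : ∀ (s : Finset V) (f : V → Bool),
      μ {ω | ∀ v ∈ s, ω v = f v} =
        ∏ v ∈ s, if f v then ENNReal.ofReal p else ENNReal.ofReal (1 - p))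
    (u v : V) :
    μ {ω | openConn G ω u v} ≤
      ∑' L, (#(G.finsetPathLength L u v) : ℝ≥0∞) * ENNReal.ofReal p ^ (L + 1) := by
  have hsub : {ω | openConn G ω u v} ⊆
      ⋃ L, ⋃ w ∈ G.finsetPathLength L u v, {ω | ∀ x ∈ w.support, ω x = true} := by
    rintro ω ⟨w, hw⟩
    simp only [Set.mem_iUnion]
    exact ⟨_, w.bypass, mem_finsetPathLength.mpr ⟨rfl, w.bypass_isPath⟩,
      fun x hx => hw x (w.support_bypass_subset_support hx)⟩
  calc μ {ω | openConn G ω u v}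
      ≤ ∑' L, ∑ w ∈ G.finsetPathLength L u v, μ {ω | ∀ x ∈ w.support, ω x = true} :=
        (measure_mono hsub).trans <| (measure_iUnion_le _).trans <|
          ENNReal.tsum_le_tsum fun L => measure_biUnion_finset_le _ _
    _ = ∑' L, (#(G.finsetPathLength L u v) : ℝ≥0∞) * ENNReal.ofReal p ^ (L + 1) := by
        refine tsum_congr fun L => ?_
        rw [Finset.sum_congr rfl fun w hw => ?_, Finset.sum_const, nsmul_eq_mul]
        obtain ⟨rfl, hpath⟩ := mem_finsetPathLength.mp hw
        exact measure_forall_support_eq_true hBern hpath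

end Percolation

section Growth

theorem Filter.Tendsto.pow_mul_rpow_one_div {a : ℕ → ℝ} (ha : ∀ m, 0 ≤ a m) {ρ : ℝ}
    (h : Tendsto (fun m : ℕ => a m ^ (1 / (m : ℝ))) atTop (𝓝 ρ)) {p : ℝ} (hp : 0 ≤ p) :
    Tendsto (fun m : ℕ => (p ^ m * a m) ^ (1 / (m : ℝ))) atTop (𝓝 (p * ρ)) := by
  refine (h.const_mul p).congr' ?_
  filter_upwards [eventually_ne_atTop 0] with m hm
  rw [Real.mul_rpow (by positivity) (ha m), one_div, Real.pow_rpow_inv_natCast hp hm]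

theorem exists_le_mul_pow_of_tendsto_rpow_one_div {a : ℕ → ℝ} (ha : ∀ m, 0 ≤ a m) {ρ r : ℝ}
    (h : Tendsto (fun m : ℕ => a m ^ (1 / (m : ℝ))) atTop (𝓝 ρ)) (hr : ρ < r) :
    ∃ C, 0 ≤ C ∧ ∀ m, a m ≤ C * r ^ m := by
  have hr0 : 0 < r := (ge_of_tendsto' h fun m => Real.rpow_nonneg (ha m) _).trans_lt hr
  have hev : ∀ᶠ m in atTop, a m / r ^ m ≤ 1 := by
    filter_upwards [h.eventually_lt_const hr, eventually_ne_atTop 0] with m hm hm0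
    rw [div_le_one (by positivity), ← Real.rpow_inv_natCast_pow (ha m) hm0, ← one_div]
    exact pow_le_pow_left₀ (Real.rpow_nonneg (ha m) _) hm.le m
  obtain ⟨C, hC⟩ := (isBoundedUnder_of_eventually_le hev).bddAbove_range
  have hle : ∀ m, a m ≤ C * r ^ m := fun m =>
    (div_le_iff₀ (by positivity)).mp (hC ⟨m, rfl⟩)
  exact ⟨C, nonneg_of_mul_nonneg_left ((ha 0).trans (hle 0)) (by simp), hle⟩

theorem ENNReal.tsum_le_of_le_geometric {f : ℕ → ℝ≥0∞} {d : ℕ} (hf0 : ∀ L < d, f L = 0)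
    {K r : ℝ} (hK : 0 ≤ K) (hr0 : 0 ≤ r) (hr1 : r < 1)
    (hf : ∀ L, f L ≤ ENNReal.ofReal (K * r ^ L)) :
    ∑' L, f L ≤ ENNReal.ofReal (K / (1 - r) * r ^ d) := by
  rw [← ENNReal.summable.sum_add_tsum_nat_add' (k := d),
    Finset.sum_eq_zero fun L hL => hf0 L (Finset.mem_range.mp hL), zero_add]
  have hsum := (summable_geometric_of_lt_one hr0 hr1).mul_left (K * r ^ d)
  calc ∑' k, f (k + d) ≤ ∑' k, ENNReal.ofReal (K * r ^ d * r ^ k) :=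
        ENNReal.tsum_le_tsum fun k => (hf _).trans_eq (by ring_nf)
    _ = ENNReal.ofReal (K / (1 - r) * r ^ d) := by
        rw [← ENNReal.ofReal_tsum_of_nonneg (fun k => by positivity) hsum, tsum_mul_left,
          tsum_geometric_of_lt_one hr0 hr1]
        ring_nf

end Growth

theorem connectivity_exponential_decay_general {V : Type*}
    (G : SimpleGraph V) [G.LocallyFinite]
    (dmax : ℕ) (hd : ∀ v, G.degree v ≤ dmax)
    (T : l2 G.Dart →L[ℝ] l2 G.Dart)
    (hT : ∀ a b : G.Dart,
      ⟪e a, T (e b)⟫ = if a.toProd.2 = b.toProd.1 ∧ b ≠ a.symm then (1 : ℝ) else 0)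
    (ρ : ℝ) (hρ : Tendsto (fun m : ℕ => ‖T ^ m‖ ^ (1 / (m : ℝ))) atTop (nhds ρ))
    (p : ℝ) (hp0 : 0 ≤ p) (hp1 : p ≤ 1) (hp : p * ρ < 1)
    (μ : Measure (V → Bool))
    (hBern : ∀ (s : Finset V) (f : V → Bool),
      μ {ω | ∀ v ∈ s, ω v = f v} =
        ∏ v ∈ s, if f v then ENNReal.ofReal p else ENNReal.ofReal (1 - p)) :
    ∃ (ρ' C : ℝ), ρ' < 1 ∧ 0 < C ∧
      ∀ u v : V, u ≠ v →
        μ {ω | openConn G ω u v} ≤ ENNReal.ofReal (C * ρ' ^ (G.dist u v)) := by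
  have hρ0 : 0 ≤ ρ := ge_of_tendsto' hρ fun m => Real.rpow_nonneg (norm_nonneg _) _
  obtain ⟨ρ', hpρ', hρ'1⟩ := exists_between hp
  have hρ'0 : 0 < ρ' := (mul_nonneg hp0 hρ0).trans_lt hpρ'
  obtain ⟨C', hC'0, hC'⟩ := exists_le_mul_pow_of_tendsto_rpow_one_div (fun m => by positivity)
    (hρ.pow_mul_rpow_one_div (fun m => norm_nonneg _) hp0) hpρ'
  set K := (dmax : ℝ) ^ 2 * C' / ρ'
  refine ⟨ρ', max (K / (1 - ρ')) 1, hρ'1, lt_max_of_lt_right one_pos, fun u v huv => ?_⟩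
  calc μ {ω | openConn G ω u v}
      ≤ ∑' L, (#(G.finsetPathLength L u v) : ℝ≥0∞) * ENNReal.ofReal p ^ (L + 1) :=
        measure_openConn_le_tsum G hBern u v
    _ ≤ ENNReal.ofReal (K / (1 - ρ') * ρ' ^ G.dist u v) :=
        ENNReal.tsum_le_of_le_geometric
          (fun L hL => by simp [finsetPathLength_eq_empty_of_lt_dist hL]) (by positivity)
          hρ'0.le hρ'1
          (IsHashimoto.card_finsetPathLength_mul_pow_le hT hd hp0 hp1 hρ'0 hC'0 hC' huv)
    _ ≤ ENNReal.ofReal (max (K / (1 - ρ')) 1 * ρ' ^ G.dist u v) :=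
        ENNReal.ofReal_le_ofReal (by gcongr; exact le_max_left _ _)

/-- Exponential decay of connectivity for site percolation on an infinite locally finite
graph with `p < 1/ρ_{ℓ²}(H)`, where `H` is the Hashimoto matrix realized as a bounded
operator `T` on `ℓ²` of the arcs, with `ρ = lim ‖Tᵐ‖^{1/m}`. -/
theorem connectivity_exponential_decay {V : Type*} [Infinite V]
    (G : SimpleGraph V) [G.LocallyFinite]
    (dmax : ℕ) (hd : ∀ v, G.degree v ≤ dmax)
    (T : l2 G.Dart →L[ℝ] l2 G.Dart)
    (hT : ∀ a b : G.Dart,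
      ⟪e a, T (e b)⟫ = if a.toProd.2 = b.toProd.1 ∧ b ≠ a.symm then (1 : ℝ) else 0)
    (ρ : ℝ) (hρ : Tendsto (fun m : ℕ => ‖T ^ m‖ ^ (1 / (m : ℝ))) atTop (nhds ρ))
    (p : ℝ) (hp0 : 0 ≤ p) (hp1 : p ≤ 1) (hp : p * ρ < 1)
    (μ : Measure (V → Bool)) [IsProbabilityMeasure μ]
    (hBern : ∀ (s : Finset V) (f : V → Bool),
      μ {ω | ∀ v ∈ s, ω v = f v} =
        ∏ v ∈ s, if f v then ENNReal.ofReal p else ENNReal.ofReal (1 - p)) :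
    ∃ (ρ' C : ℝ), ρ' < 1 ∧ 0 < C ∧
      ∀ u v : V, u ≠ v →
        μ {ω | openConn G ω u v} ≤ ENNReal.ofReal (C * ρ' ^ (G.dist u v)) :=
  connectivity_exponential_decay_general G dmax hd T hT ρ hρ p hp0 hp1 hp μ hBern
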